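/- Let v^s_m := (∂_x^m v^top)(0, t_1, t_2, …) denote the restriction to t_0 = 0 of the m-th x-derivative of the topological solution of the Riemann hierarchy. Then for every m ≥ 1, v^s_m = Σ_{μ ∈ Y_{m-1}} ((m-1+ℓ(μ))! / ∏_{j≥1}(j+1)!^{m_j(μ)}) · t_{μ+1} / (m(μ)!·(1-t_1)^{m+ℓ(μ)}), where the sum is over partitions μ of weight m-1 and t_{μ+1} := t_{μ_1+1}⋯t_{μ_{ℓ(μ)}+1}. -/

import Mathlib

noncomputable section
open scoped BigOperators

/-- `m(μ)! = ∏_j m_j(μ)!` where `m_j(μ)` is the multiplicity of `j` in `μ`. -/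
def mFact (μ : Multiset ℕ) : ℚ := ∏ j ∈ μ.toFinset, ((μ.count j).factorial : ℚ)

/-- The Lagrange number `L(μ)` of a partition (multiset) `μ`. -/
def LagrangeL (μ : Multiset ℕ) : ℚ :=
  (-1 : ℚ) ^ Multiset.card μ * ((μ.sum + Multiset.card μ).factorial : ℚ) /
    (mFact μ * (μ.map fun j => ((j + 1).factorial : ℚ)).prod)
/-- The topological solution `v^top` of the Riemann hierarchy, as a formal power
series in `t_0, t_1, t_2, …`: `v^top = Σ_{k≥1} (1/k) Σ_{p_1+⋯+p_k=k-1} ∏ t_{p_i}/p_i!`,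
written coefficientwise. -/
def vtop : MvPowerSeries ℕ ℂ := fun m =>
  if 1 ≤ (m.sum fun _ n => n) ∧ (m.sum fun i n => i * n) + 1 = (m.sum fun _ n => n) then
    (((m.sum fun _ n => n) - 1).factorial : ℂ) /
      (m.prod fun i n => ((n.factorial : ℂ) * (i.factorial : ℂ) ^ n))
  else 0

/-- Partial derivative `∂/∂t_i` on formal power series in `t_0, t_1, …`. -/
def pd (i : ℕ) (f : MvPowerSeries ℕ ℂ) : MvPowerSeries ℕ ℂ := fun m =>
  ((m i : ℂ) + 1) * MvPowerSeries.coeff (m + Finsupp.single i 1) f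

/-- Restriction `t_0 = 0` of a formal power series. -/
def setZero (f : MvPowerSeries ℕ ℂ) : MvPowerSeries ℕ ℂ := fun m =>
  if m 0 = 0 then MvPowerSeries.coeff m f else 0

/-- `v^s_m := (∂_x^m v^top)|_{t_0=0}`, with `x = t_0`. -/
def vs (m : ℕ) : MvPowerSeries ℕ ℂ := setZero ((pd 0)^[m] vtop)

/-- The monomial `t_{μ+1} = ∏_{i ∈ μ} t_{i+1}` indexed by a multiset `μ`. -/
def tmon (μ : Multiset ℕ) : MvPowerSeries ℕ ℂ :=
  (μ.map fun i => (MvPowerSeries.X (i + 1) : MvPowerSeries ℕ ℂ)).prod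

/-- The monomial `v^s_{μ+1} = ∏_{i ∈ μ} v^s_{i+1}` indexed by a multiset `μ`. -/
def vsmon (μ : Multiset ℕ) : MvPowerSeries ℕ ℂ := (μ.map fun i => vs (i + 1)).prod

/-! Restricting `∂ₓ^m v^top` to `t₀ = 0` only shifts exponents: the coefficient of `t^e` in `v^s_m`
is `(|e| + m - 1)! / ∏ᵢ eᵢ! (i!)^{eᵢ}` if `e₀ = 0` and `∑ i eᵢ + 1 = m + |e|`, and zero otherwise.
On the right-hand side, `t_{μ+1}` involves only the variables `t_j` with `j ≥ 2`, and
`(1 - t₁)^{-(N+1)} = ∑_r binom(N + r, N) t₁^r`. So a monomial `t^e` occurs in at most one summand,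
the one whose partition `μ` lists the indices `j ≥ 2` of `e` (with multiplicity) lowered by one;
the weight condition on `e` says exactly that `μ` has weight `m - 1`. Comparing coefficients then
comes down to `(a + r)! = binom(a + r, a) a! r!`. -/

open MvPowerSeries Finsupp

section GeometricSeries

variable {σ k : Type*} [Field k]

theorem inv_one_sub_X_pow_eq_subst (s : σ) (d : ℕ) :
    ((1 - X s : MvPowerSeries σ k)⁻¹) ^ (d + 1) =
      PowerSeries.subst (X s) (PowerSeries.invOneSubPow k (d + 1)).val := by
  have hsubst : PowerSeries.HasSubst (X s : MvPowerSeries σ k) := PowerSeries.HasSubst.X s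
  have hinv : ((1 - X s : MvPowerSeries σ k)⁻¹) ^ (d + 1) * (1 - X s) ^ (d + 1) = 1 := by
    rw [← mul_pow, MvPowerSeries.inv_mul_cancel _ (by simp), one_pow]
  refine left_inv_eq_right_inv hinv ?_
  have := congrArg (PowerSeries.substAlgHom hsubst) (PowerSeries.invOneSubPow k (d + 1)).inv_val
  rwa [PowerSeries.invOneSubPow_inv_eq_one_sub_pow, map_mul, map_pow, map_sub, map_one,
    PowerSeries.substAlgHom_X, PowerSeries.coe_substAlgHom] at this

theorem coeff_inv_one_sub_X_pow [DecidableEq σ] (s : σ) (d : ℕ) (e : σ →₀ ℕ) :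
    coeff e (((1 - X s : MvPowerSeries σ k)⁻¹) ^ (d + 1)) =
      if e = single s (e s) then ((d + e s).choose d : k) else 0 := by
  rw [inv_one_sub_X_pow_eq_subst, PowerSeries.coeff_subst_single,
    PowerSeries.invOneSubPow_val_succ_eq_mk_add_choose, PowerSeries.coeff_mk]

theorem le_and_sub_eq_single_iff {d e : σ →₀ ℕ} {s : σ} (hd : d s = 0) :
    d ≤ e ∧ e - d = single s (e s) ↔ d = erase s e := by
  constructor
  · rintro ⟨hle, hsub⟩
    ext i
    have hi := DFunLike.congr_fun hsub i
    have := hle i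
    by_cases his : i = s
    · subst his; simp [hd]
    · simp only [tsub_apply, single_eq_of_ne his, erase_ne his] at hi ⊢
      omega
  · rintro rfl
    refine ⟨fun i => ?_, ?_⟩
    · by_cases his : i = s
      · simp [his]
      · simp [erase_ne his]
    · ext i
      by_cases his : i = s
      · simp [his]
      · simp [erase_ne his, Ne.symm his]

theorem coeff_monomial_mul_inv_one_sub_X_pow [DecidableEq σ] {d : σ →₀ ℕ} {s : σ} (hd : d s = 0)
    (N : ℕ) (e : σ →₀ ℕ) :
    coeff e (monomial d 1 * ((1 - X s : MvPowerSeries σ k)⁻¹) ^ (N + 1)) =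
      if d = erase s e then ((N + e s).choose N : k) else 0 := by
  rw [coeff_monomial_mul, coeff_inv_one_sub_X_pow, tsub_apply, hd, tsub_zero, one_mul, ← ite_and]
  exact if_congr (le_and_sub_eq_single_iff hd) rfl rfl

end GeometricSeries

theorem weight_id_toFinsupp (M : Multiset ℕ) : weight id (Multiset.toFinsupp M) = M.sum := by
  conv_rhs => rw [← Multiset.toFinsupp_toMultiset M, Finsupp.sum_toMultiset]
  rfl

theorem degree_toFinsupp {α : Type*} [DecidableEq α] (M : Multiset α) :
    degree (Multiset.toFinsupp M) = Multiset.card M := by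
  conv_rhs => rw [← Multiset.toFinsupp_toMultiset M, Finsupp.card_toMultiset]
  rfl

def tmonExponent (ν : Multiset ℕ) : ℕ →₀ ℕ := Multiset.toFinsupp (ν.map (· + 1))

theorem tmon_eq_monomial (ν : Multiset ℕ) : tmon ν = monomial (tmonExponent ν) 1 := by
  induction ν using Multiset.induction_on with
  | empty => simp [tmon, tmonExponent]
  | cons a ν ih =>
    rw [tmon, Multiset.map_cons, Multiset.prod_cons, ← tmon, ih, X, monomial_mul_monomial, one_mul,
      tmonExponent, tmonExponent, Multiset.map_cons, ← Multiset.singleton_add,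
      Multiset.toFinsupp_add, Multiset.toFinsupp_singleton]

theorem tmonExponent_injective : Function.Injective tmonExponent :=
  Multiset.toFinsupp.injective.comp (Multiset.map_injective (add_left_injective 1))

theorem tmonExponent_apply_zero (ν : Multiset ℕ) : tmonExponent ν 0 = 0 := by
  simp [tmonExponent]

theorem tmonExponent_apply_one {ν : Multiset ℕ} (hν : 0 ∉ ν) : tmonExponent ν 1 = 0 := by
  simpa [tmonExponent] using hν

theorem weight_id_tmonExponent (ν : Multiset ℕ) :
    weight id (tmonExponent ν) = ν.sum + Multiset.card ν := by
  rw [tmonExponent, weight_id_toFinsupp, Multiset.sum_map_add]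
  simp

theorem degree_tmonExponent (ν : Multiset ℕ) : degree (tmonExponent ν) = Multiset.card ν := by
  rw [tmonExponent, degree_toFinsupp, Multiset.card_map]

def vtopDenom (e : ℕ →₀ ℕ) : ℂ := e.prod fun i n => (n.factorial : ℂ) * (i.factorial : ℂ) ^ n

theorem vtopDenom_ne_zero (e : ℕ →₀ ℕ) : vtopDenom e ≠ 0 :=
  Finset.prod_ne_zero_iff.mpr fun _ _ => by simp [Nat.factorial_ne_zero]

theorem vtopDenom_add_single {e : ℕ →₀ ℕ} {i : ℕ} (he : e i = 0) (n : ℕ) :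
    vtopDenom (e + single i n) = vtopDenom e * ((n.factorial : ℂ) * (i.factorial : ℂ) ^ n) := by
  have hdisj : Disjoint e.support (single i n).support :=
    Finset.disjoint_of_subset_right support_single_subset (by simpa using he)
  rw [vtopDenom, prod_add_index_of_disjoint hdisj, prod_single_index (by simp), vtopDenom]

theorem vtopDenom_tmonExponent (ν : Multiset ℕ) :
    vtopDenom (tmonExponent ν) =
      ((mFact ν * (ν.map fun j => ((j + 1).factorial : ℚ)).prod : ℚ) : ℂ) := by
  have hinj : Function.Injective (· + 1 : ℕ → ℕ) := add_left_injective 1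
  have hcount (j : ℕ) : tmonExponent ν (j + 1) = ν.count j := by
    rw [tmonExponent, Multiset.toFinsupp_apply, Multiset.count_map_eq_count' _ _ hinj]
  rw [vtopDenom, Finsupp.prod, show (tmonExponent ν).support = (ν.map (· + 1)).toFinset from rfl,
    Multiset.toFinset_map, Finset.prod_image (fun a _ b _ h => hinj h)]
  simp only [hcount, Finset.prod_mul_distrib, mFact, Finset.prod_multiset_map_count]
  push_cast
  rfl

theorem coeff_vtop (e : ℕ →₀ ℕ) :
    coeff e vtop =
      if 1 ≤ degree e ∧ weight id e + 1 = degree e then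
        ((degree e - 1).factorial : ℂ) / vtopDenom e
      else 0 := by
  simp only [weight_apply, smul_eq_mul, id, mul_comm _ (_ : ℕ)]
  rfl

theorem coeff_pd (i : ℕ) (f : MvPowerSeries ℕ ℂ) (e : ℕ →₀ ℕ) :
    coeff e (pd i f) = ((e i : ℂ) + 1) * coeff (e + single i 1) f :=
  rfl

theorem coeff_iterate_pd (i m : ℕ) (f : MvPowerSeries ℕ ℂ) (e : ℕ →₀ ℕ) :
    coeff e ((pd i)^[m] f) = ((e i + 1).ascFactorial m : ℂ) * coeff (e + single i m) f := by
  induction m generalizing f e with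
  | zero => simp
  | succ m ih =>
    rw [Function.iterate_succ_apply, ih, coeff_pd, add_assoc, ← single_add, Nat.ascFactorial_succ]
    simp only [Finsupp.add_apply, single_eq_same]
    push_cast
    ring

theorem coeff_setZero {f : MvPowerSeries ℕ ℂ} {e : ℕ →₀ ℕ} (he : e 0 = 0) :
    coeff e (setZero f) = coeff e f :=
  if_pos he

theorem coeff_vs {m : ℕ} (hm : 1 ≤ m) {e : ℕ →₀ ℕ} (he : e 0 = 0) :
    coeff e (vs m) =
      if weight id e + 1 = degree e + m then
        ((degree e + m - 1).factorial : ℂ) / vtopDenom e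
      else 0 := by
  rw [vs, coeff_setZero he, coeff_iterate_pd, he, zero_add, Nat.one_ascFactorial, coeff_vtop,
    vtopDenom_add_single he]
  simp only [map_add, degree_single, weight_single, id, smul_zero, add_zero, Nat.factorial_zero,
    Nat.cast_one, one_pow, mul_one]
  have hfact : (m.factorial : ℂ) ≠ 0 := by exact_mod_cast m.factorial_ne_zero
  have hdenom := vtopDenom_ne_zero e
  simp only [show 1 ≤ degree e + m by omega, true_and]
  split_ifs
  · field_simp
  · exact mul_zero _

theorem exists_partition_tmonExponent_eq_erase {n : ℕ} {e : ℕ →₀ ℕ} (he : e 0 = 0)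
    (hw : weight id e + 1 = degree e + (n + 1)) :
    ∃ μ : Nat.Partition n, tmonExponent μ.parts = erase 1 e := by
  set M := toMultiset (erase 1 e) with hM
  have hMe : Multiset.toFinsupp M = erase 1 e := Finsupp.toMultiset_toFinsupp _
  have two_le : ∀ i ∈ M, 2 ≤ i := by
    intro i hi
    rw [hM, mem_toMultiset, mem_support_iff] at hi
    rcases i with _ | _ | i
    · simp [he] at hi
    · simp at hi
    · omega
  have hcancel : (M.map (· - 1)).map (· + 1) = M := by
    rw [Multiset.map_map]
    conv_rhs => rw [← Multiset.map_id M]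
    exact Multiset.map_congr rfl fun i hi => by have := two_le i hi; simp only [Function.comp_apply, id_eq]; omega
  have hweight : weight id e = M.sum + e 1 := by
    conv_lhs => rw [← erase_add_single 1 e]
    rw [map_add, ← hMe, weight_id_toFinsupp, weight_single, smul_eq_mul, id, mul_one]
  have hdegree : degree e = Multiset.card M + e 1 := by
    conv_lhs => rw [← erase_add_single 1 e]
    rw [map_add, ← hMe, degree_toFinsupp, degree_single]
  have hsum : (M.map (· - 1)).sum = n := by
    have := congrArg Multiset.sum hcancel
    rw [Multiset.sum_map_add] at this
    simp only [Multiset.map_map, Function.comp_apply, Multiset.map_const', Multiset.sum_replicate,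
      smul_eq_mul, mul_one] at this
    omega
  refine ⟨⟨M.map (· - 1), fun {j} hj => ?_, hsum⟩, ?_⟩
  · obtain ⟨i, hi, rfl⟩ := Multiset.mem_map.mp hj
    have := two_le i hi
    omega
  · rw [tmonExponent, hcancel, hMe]

theorem coeff_tmon_mul_inv_one_sub_X_pow {ν : Multiset ℕ} (hν : 0 ∉ ν) (N : ℕ) (e : ℕ →₀ ℕ) :
    coeff e (tmon ν * ((1 - X 1 : MvPowerSeries ℕ ℂ)⁻¹) ^ (N + 1)) =
      if tmonExponent ν = erase 1 e then ((N + e 1).choose N : ℂ) else 0 := by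
  rw [tmon_eq_monomial]
  exact coeff_monomial_mul_inv_one_sub_X_pow (tmonExponent_apply_one hν) N e

theorem Nat.Partition.zero_notMem_parts {n : ℕ} (μ : Nat.Partition n) : 0 ∉ μ.parts :=
  fun h => (μ.parts_pos h).false

theorem coeff_vs_succ_eq_zero {n : ℕ} {e : ℕ →₀ ℕ}
    (h : ¬∃ μ : Nat.Partition n, tmonExponent μ.parts = erase 1 e) : coeff e (vs (n + 1)) = 0 := by
  by_cases he : e 0 = 0
  · rw [coeff_vs (Nat.le_add_left 1 n) he,
      if_neg fun hw => h (exists_partition_tmonExponent_eq_erase he hw)]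
  · exact if_neg he

theorem coeff_vs_succ_tmonExponent_add_single {n : ℕ} (μ : Nat.Partition n) (r : ℕ) :
    coeff (tmonExponent μ.parts + single 1 r) (vs (n + 1)) =
      ((n + Multiset.card μ.parts + r).factorial : ℂ) /
        (((mFact μ.parts * (μ.parts.map fun j => ((j + 1).factorial : ℚ)).prod : ℚ) : ℂ) *
          r.factorial) := by
  have h1 := tmonExponent_apply_one μ.zero_notMem_parts
  rw [coeff_vs (Nat.le_add_left 1 n) (by simp [tmonExponent_apply_zero]),
    vtopDenom_add_single h1, vtopDenom_tmonExponent]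
  simp only [map_add, weight_id_tmonExponent, degree_tmonExponent, weight_single, degree_single,
    μ.parts_sum, smul_eq_mul, id, mul_one, Nat.factorial_one, Nat.cast_one, one_pow]
  rw [if_pos (by ring), show Multiset.card μ.parts + r + (n + 1) - 1 = n + Multiset.card μ.parts + r
    by omega]

theorem sum_ite_tmonExponent_eq {n : ℕ} {d : ℕ →₀ ℕ} {μ : Nat.Partition n}
    (hμ : tmonExponent μ.parts = d) (f : Nat.Partition n → ℂ) :
    (∑ ν, if tmonExponent ν.parts = d then f ν else 0) = f μ := by
  rw [Finset.sum_eq_single μ (fun ν _ hνμ => if_neg fun hν => hνμ (Nat.Partition.ext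
    (tmonExponent_injective (hν.trans hμ.symm)))) (by simp), if_pos hμ]

theorem factorial_add_div_eq_div_mul_choose (a r : ℕ) (q : ℚ) :
    ((a + r).factorial : ℂ) / (q * r.factorial) =
      (((a.factorial : ℚ) / q : ℚ) : ℂ) * ((a + r).choose a : ℂ) := by
  rw [Nat.choose_symm_add, ← Nat.add_choose_mul_factorial_mul_factorial]
  push_cast
  rw [mul_div_mul_right _ _ (by exact_mod_cast r.factorial_ne_zero)]
  ring

/-- For `m ≥ 1`,
`v^s_m = Σ_{μ ∈ Y_{m-1}} ((m-1+ℓ(μ))!/∏_j (j+1)!^{m_j(μ)}) t_{μ+1}/(m(μ)! (1-t_1)^{m+ℓ(μ)})`. -/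
theorem vs_formula (m : ℕ) (hm : 1 ≤ m) :
    vs m =
      ∑ μ : Nat.Partition (m - 1),
        (((((m - 1 + Multiset.card μ.parts).factorial : ℚ) /
            (mFact μ.parts * (μ.parts.map fun j => ((j + 1).factorial : ℚ)).prod) : ℚ)) : ℂ) •
          (tmon μ.parts *
            ((1 - MvPowerSeries.X 1 : MvPowerSeries ℕ ℂ)⁻¹) ^ (m + Multiset.card μ.parts)) := by
  obtain ⟨n, rfl⟩ := Nat.exists_eq_add_of_le' hm
  ext e
  have hterm (μ : Nat.Partition n) :
      coeff e (tmon μ.parts * ((1 - X 1 : MvPowerSeries ℕ ℂ)⁻¹) ^ (n + 1 + Multiset.card μ.parts)) =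
        if tmonExponent μ.parts = erase 1 e then
          ((n + Multiset.card μ.parts + e 1).choose (n + Multiset.card μ.parts) : ℂ) else 0 := by
    rw [add_right_comm]
    exact coeff_tmon_mul_inv_one_sub_X_pow μ.zero_notMem_parts _ e
  simp only [Nat.add_sub_cancel, map_sum, coeff_smul, hterm, mul_ite, mul_zero]
  by_cases h : ∃ μ : Nat.Partition n, tmonExponent μ.parts = erase 1 e
  · obtain ⟨μ, hμ⟩ := h
    refine Eq.trans ?_ (sum_ite_tmonExponent_eq hμ _).symm
    obtain ⟨r, rfl⟩ : ∃ r, e = tmonExponent μ.parts + single 1 r :=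
      ⟨e 1, by rw [hμ, erase_add_single]⟩
    have hr : (tmonExponent μ.parts + single 1 r : ℕ →₀ ℕ) 1 = r := by
      simp [tmonExponent_apply_one μ.zero_notMem_parts]
    rw [coeff_vs_succ_tmonExponent_add_single, hr]
    exact factorial_add_div_eq_div_mul_choose _ _ _
  · rw [coeff_vs_succ_eq_zero h]
    exact (Finset.sum_eq_zero fun μ _ => if_neg fun hμ => h ⟨μ, hμ⟩).symm
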